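/- arXiv:1601.00842 — 10 statements merged into one kernel-verified Lean document; each statement's English description precedes it below -/
import Mathlib

section
/- Let n ≥ 1 be an integer and λ > 0, μ > 0 real numbers with μ ≤ 1/n satisfying (1+λ)^{n+1}/λ = (1+μ)^{n+1}/μ. Define h = λ^{n/(n+1)} · μ^{1/(n+1)}. Then (h−1)·λ^n + h·λ^{n−1} − h^{n+1} = 0. -/
theorem stmt_2 (n : ℕ) (hn : 1 ≤ n) (l μ : ℝ) (hl : 0 < l) (hμ : 0 < μ)
    (hμn : μ ≤ 1 / (n : ℝ))
    (heq : (1 + l) ^ (n + 1) / l = (1 + μ) ^ (n + 1) / μ)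
    (h : ℝ) (hdef : h = l ^ ((n : ℝ) / ((n : ℝ) + 1)) * μ ^ (1 / ((n : ℝ) + 1))) :
    (h - 1) * l ^ n + h * l ^ (n - 1) - h ^ (n + 1) = 0 := by
  have hn1 : (0:ℝ) < (n:ℝ) + 1 := by positivity
  have hl1 : (0:ℝ) < 1 + l := by linarith
  have hμ1 : (0:ℝ) < 1 + μ := by linarith
  have hkey : μ * (1 + l) ^ (n + 1) = l * (1 + μ) ^ (n + 1) := by
    field_simp at heq
    linarith [heq]
  have e1 : h ^ (n + 1) = l ^ n * μ := by
    rw [hdef, mul_pow, ← Real.rpow_natCast (l ^ _) (n + 1),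
        ← Real.rpow_natCast (μ ^ _) (n + 1), ← Real.rpow_mul hl.le, ← Real.rpow_mul hμ.le]
    push_cast
    rw [div_mul_cancel₀ _ (ne_of_gt hn1), one_div, inv_mul_cancel₀ (ne_of_gt hn1),
        Real.rpow_natCast, Real.rpow_one]
  have hh : h = l * (1 + μ) / (1 + l) := by
    have hhp : 0 ≤ h := by rw [hdef]; positivity
    have h2 : 0 ≤ l * (1 + μ) / (1 + l) := by positivity
    have hpow : h ^ (n + 1) = (l * (1 + μ) / (1 + l)) ^ (n + 1) := by
      rw [e1, div_pow, mul_pow, eq_div_iff (by positivity)]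
      calc l ^ n * μ * (1 + l) ^ (n + 1) = l ^ n * (μ * (1 + l) ^ (n + 1)) := by ring
        _ = l ^ n * (l * (1 + μ) ^ (n + 1)) := by rw [hkey]
        _ = l ^ (n + 1) * (1 + μ) ^ (n + 1) := by rw [pow_succ]; ring
    exact pow_left_strictMonoOn₀ (n := n + 1) (by omega) |>.injOn hhp h2 hpow
  obtain ⟨m, rfl⟩ : ∃ m, n = m + 1 := ⟨n - 1, by omega⟩
  simp only [Nat.add_sub_cancel] at *
  rw [e1, hh]
  field_simp
  ring
end

section
/- Let n ≥ 1 be an integer and let w ≥ n and u ∈ (0, n] satisfy (1+w)^{n+1}/w^n = (1+u)^{n+1}/u^n. Then ŵ := w^{n/(n+1)} u^{1/(n+1)} satisfies ŵ ≤ n^{1/(n+1)} · w^{n/(n+1)}, with equality if and only if w = n. -/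
private lemma hasDerivAt_f (n : ℕ) (hn : 1 ≤ n) (x : ℝ) (hx : 0 < x) :
    HasDerivAt (fun x : ℝ => (1 + x) ^ (n + 1) / x ^ n)
      ((1 + x) ^ n * x ^ (n - 1) * (x - n) / (x ^ n) ^ 2) x := by
  obtain ⟨m, rfl⟩ := Nat.exists_eq_add_of_le hn
  have h1 : HasDerivAt (fun x : ℝ => (1 + x) ^ (1 + m + 1))
      ((↑(1 + m + 1) : ℝ) * (1 + x) ^ (1 + m) * 1) x := by
    have := ((hasDerivAt_id x).const_add 1).fun_pow (1 + m + 1)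
    exact this.congr_deriv (by simp)
  have h2 : HasDerivAt (fun x : ℝ => x ^ (1 + m)) ((↑(1 + m) : ℝ) * x ^ m) x := by
    simpa using hasDerivAt_pow (1 + m) x
  have h := h1.fun_div h2 (pow_ne_zero _ hx.ne')
  refine h.congr_deriv ?_
  have hxne : x ≠ 0 := hx.ne'
  simp only [Nat.add_sub_cancel, Nat.add_sub_cancel_left, Nat.cast_add, Nat.cast_one]
  field_simp
  ring

private lemma f_strictMonoOn (n : ℕ) (hn : 1 ≤ n) :
    StrictMonoOn (fun x : ℝ => (1 + x) ^ (n + 1) / x ^ n) (Set.Ici (n : ℝ)) := by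
  have hnpos : (0 : ℝ) < n := by exact_mod_cast hn
  apply strictMonoOn_of_deriv_pos (convex_Ici _)
  · apply ContinuousOn.div (by fun_prop) (by fun_prop)
    intro x hx
    exact pow_ne_zero _ (lt_of_lt_of_le hnpos hx).ne'
  · intro x hx
    rw [interior_Ici, Set.mem_Ioi] at hx
    have hxpos : 0 < x := lt_trans hnpos hx
    rw [(hasDerivAt_f n hn x hxpos).deriv]
    apply div_pos
    · apply mul_pos (mul_pos (pow_pos (by linarith) _) (pow_pos hxpos _))
      linarith
    · positivity

private lemma f_strictAntiOn (n : ℕ) (hn : 1 ≤ n) :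
    StrictAntiOn (fun x : ℝ => (1 + x) ^ (n + 1) / x ^ n) (Set.Ioc (0 : ℝ) (n : ℝ)) := by
  have hnpos : (0 : ℝ) < n := by exact_mod_cast hn
  apply strictAntiOn_of_deriv_neg (convex_Ioc _ _)
  · apply ContinuousOn.div (by fun_prop) (by fun_prop)
    intro x hx
    exact pow_ne_zero _ hx.1.ne'
  · intro x hx
    rw [interior_Ioc] at hx
    rw [(hasDerivAt_f n hn x hx.1).deriv]
    apply div_neg_of_neg_of_pos
    · apply mul_neg_of_pos_of_neg (mul_pos (pow_pos (by linarith [hx.1]) _) (pow_pos hx.1 _))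
      linarith [hx.2]
    · exact pow_pos (pow_pos hx.1 _) _

theorem stmt_4 (n : ℕ) (hn : 1 ≤ n) (w u : ℝ) (hw : (n : ℝ) ≤ w)
    (hu : u ∈ Set.Ioc (0 : ℝ) (n : ℝ))
    (heq : (1 + w) ^ (n + 1) / w ^ n = (1 + u) ^ (n + 1) / u ^ n)
    (wh : ℝ) (hdef : wh = w ^ ((n : ℝ) / ((n : ℝ) + 1)) * u ^ (1 / ((n : ℝ) + 1))) :
    wh ≤ (n : ℝ) ^ (1 / ((n : ℝ) + 1)) * w ^ ((n : ℝ) / ((n : ℝ) + 1)) ∧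
    (wh = (n : ℝ) ^ (1 / ((n : ℝ) + 1)) * w ^ ((n : ℝ) / ((n : ℝ) + 1)) ↔ w = n) := by
  have hnpos : (0 : ℝ) < n := by exact_mod_cast hn
  have hwpos : 0 < w := lt_of_lt_of_le hnpos hw
  have hb : (0 : ℝ) < 1 / ((n : ℝ) + 1) := by positivity
  have hwa : 0 < w ^ ((n : ℝ) / ((n : ℝ) + 1)) := Real.rpow_pos_of_pos hwpos _
  have hub : u ^ (1 / ((n : ℝ) + 1)) ≤ (n : ℝ) ^ (1 / ((n : ℝ) + 1)) :=
    Real.rpow_le_rpow hu.1.le hu.2 hb.le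
  -- w = n ↔ u = n
  have hwu : w = n ↔ u = n := by
    constructor
    · intro hwn
      by_contra hun
      have hlt : u < n := lt_of_le_of_ne hu.2 hun
      have := f_strictAntiOn n hn (Set.mem_Ioc.mpr ⟨hu.1, hu.2⟩)
        (Set.mem_Ioc.mpr ⟨hnpos, le_refl _⟩) hlt
      simp only at this
      rw [← hwn, ← heq] at this
      exact lt_irrefl _ this
    · intro hun
      by_contra hwn
      have hlt : (n : ℝ) < w := lt_of_le_of_ne hw (Ne.symm hwn)
      have := f_strictMonoOn n hn (Set.mem_Ici.mpr (le_refl _))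
        (Set.mem_Ici.mpr hw) hlt
      simp only at this
      rw [← hun, ← heq] at this
      exact lt_irrefl _ this
  constructor
  · rw [hdef, mul_comm ((n : ℝ) ^ (1 / ((n : ℝ) + 1))) _]
    exact mul_le_mul_of_nonneg_left hub hwa.le
  · rw [hdef, mul_comm ((n : ℝ) ^ (1 / ((n : ℝ) + 1))) _, hwu]
    constructor
    · intro h
      have h2 : u ^ (1 / ((n : ℝ) + 1)) = (n : ℝ) ^ (1 / ((n : ℝ) + 1)) :=
        mul_left_cancel₀ hwa.ne' h
      exact Real.rpow_left_injOn (x := 1 / ((n : ℝ) + 1)) hb.ne'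
        (Set.mem_setOf.mpr hu.1.le) (Set.mem_setOf.mpr hnpos.le) h2
    · intro h
      rw [h]
end

section
/- Let n and j be integers with 3 ≤ j ≤ n and n ≤ 2j − 3. Define χ_{n,j}(t) = ∑_{i=j−1−n}^{j−2} t^i for t > 0. Then χ_{n,j}(t) > n for all t > 1. -/
theorem stmt_6 (n j : ℕ) (hj : 3 ≤ j) (hjn : j ≤ n) (hn : n ≤ 2 * j - 3) :
    ∀ t : ℝ, 1 < t →
      (n : ℝ) < ∑ i ∈ Finset.range n, t ^ ((j : ℤ) - 2 - i) := by
  intro t ht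
  have ht0 : (0:ℝ) < t := lt_trans one_pos ht
  have hlog : 0 < Real.log t := Real.log_pos ht
  have hexp : ∀ i : ℕ, t ^ ((j : ℤ) - 2 - i)
      = Real.exp (Real.log t * ((j : ℤ) - 2 - i)) := by
    intro i
    rw [← Real.rpow_intCast, Real.rpow_def_of_pos ht0]
    push_cast
    ring_nf
  have hle : ∀ i ∈ Finset.range n,
      (1 + Real.log t * ((j : ℤ) - 2 - i)) ≤ t ^ ((j : ℤ) - 2 - i) := by
    intro i _
    rw [hexp i]
    have := Real.add_one_le_exp (Real.log t * ((j : ℤ) - 2 - i))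
    linarith
  have hstrict : (1 + Real.log t * ((j : ℤ) - 2 - (0:ℕ))) < t ^ ((j : ℤ) - 2 - (0:ℕ)) := by
    rw [hexp 0]
    have hne : Real.log t * ((j : ℤ) - 2 - (0:ℕ)) ≠ 0 := by
      apply mul_ne_zero (ne_of_gt hlog)
      have h3 : (3:ℝ) ≤ (j:ℝ) := by exact_mod_cast hj
      push_cast
      intro h; linarith
    have := Real.add_one_lt_exp hne
    linarith
  have h0mem : (0:ℕ) ∈ Finset.range n := Finset.mem_range.mpr (by omega)
  have hsum : ∑ i ∈ Finset.range n, (1 + Real.log t * ((j : ℤ) - 2 - i))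
      < ∑ i ∈ Finset.range n, t ^ ((j : ℤ) - 2 - i) :=
    Finset.sum_lt_sum hle ⟨0, h0mem, hstrict⟩
  -- sum of exponents is nonnegative
  have hS : (0:ℤ) ≤ ∑ i ∈ Finset.range n, ((j : ℤ) - 2 - i) := by
    have hgauss : (∑ i ∈ Finset.range n, (i:ℤ)) * 2 = n * (n - 1) := by
      have h1 := Finset.sum_range_id_mul_two n
      zify [show 1 ≤ n by omega] at h1
      exact h1
    have hsplit : ∑ i ∈ Finset.range n, ((j : ℤ) - 2 - i)
        = n * ((j:ℤ) - 2) - ∑ i ∈ Finset.range n, (i:ℤ) := by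
      rw [Finset.sum_sub_distrib, Finset.sum_const, Finset.card_range]
      ring_nf
    rw [hsplit]
    have hnj : (n:ℤ) ≤ 2 * j - 3 := by
      have h3 : 3 ≤ 2 * j := by omega
      omega
    have hjn' : (j:ℤ) ≤ n := by exact_mod_cast hjn
    nlinarith [hgauss]
  have hSR : (0:ℝ) ≤ ∑ i ∈ Finset.range n, ((j : ℝ) - 2 - i) := by
    have : ((∑ i ∈ Finset.range n, ((j : ℤ) - 2 - i) : ℤ) : ℝ)
        = ∑ i ∈ Finset.range n, ((j : ℝ) - 2 - i) := by push_cast; rfl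
    rw [← this]
    exact_mod_cast hS
  have hlhs : (n:ℝ) ≤ ∑ i ∈ Finset.range n, (1 + Real.log t * ((j : ℤ) - 2 - i)) := by
    have hterm : ∀ i : ℕ, (1 + Real.log t * ((j : ℤ) - 2 - i) : ℝ)
        = 1 + Real.log t * ((j:ℝ) - 2 - i) := by intro i; push_cast; ring
    simp only [hterm]
    rw [Finset.sum_add_distrib, Finset.sum_const, Finset.card_range, ← Finset.mul_sum,
      nsmul_eq_mul, mul_one]
    nlinarith
  linarith
end

section
/- Let n and j be integers with 3 ≤ j ≤ n and n ≥ 2j − 2. Define χ_{n,j}(t) = ∑_{i=j−1−n}^{j−2} t^i for t > 0. Then there exists exactly one t₀ > 1 with χ_{n,j}(t₀) = n; moreover χ_{n,j}(t) < n for t ∈ (1, t₀) and χ_{n,j}(t) > n for t > t₀. -/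
open Finset Set Filter Topology

lemma aux_convexOn_sum (k : ℕ) (e : ℕ → ℤ) :
    ConvexOn ℝ (Set.Ioi 0) (fun t : ℝ => ∑ i ∈ Finset.range k, t ^ (e i)) := by
  induction k with
  | zero => simpa using convexOn_const (0:ℝ) (convex_Ioi (0:ℝ))
  | succ k ih =>
      have h : (fun t : ℝ => ∑ i ∈ Finset.range (k+1), t ^ (e i)) =
          (fun t : ℝ => ∑ i ∈ Finset.range k, t ^ (e i)) + fun t : ℝ => t ^ (e k) := by
        funext t; simp [Finset.sum_range_succ]
      rw [h]
      exact ih.add (convexOn_zpow (e k))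

theorem stmt_7 (n j : ℕ) (hj : 3 ≤ j) (hjn : j ≤ n) (hn : 2 * j - 2 ≤ n) :
    ∃! t₀ : ℝ, 1 < t₀ ∧ ∑ i ∈ Finset.range n, t₀ ^ ((j : ℤ) - 2 - i) = (n : ℝ) ∧
    (∀ t : ℝ, 1 < t → t < t₀ → ∑ i ∈ Finset.range n, t ^ ((j : ℤ) - 2 - i) < (n : ℝ)) ∧
    (∀ t : ℝ, t₀ < t → (n : ℝ) < ∑ i ∈ Finset.range n, t ^ ((j : ℤ) - 2 - i)) := by
  set F : ℝ → ℝ := fun t => ∑ i ∈ Finset.range n, t ^ ((j : ℤ) - 2 - i) with hFdef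
  have hn3 : 3 ≤ n := le_trans hj hjn
  have hF1 : F 1 = (n : ℝ) := by simp [hFdef]
  -- strict convexity on (0, ∞)
  have hconv : StrictConvexOn ℝ (Set.Ioi (0:ℝ)) F := by
    have hsplit : F = (fun t : ℝ => ∑ i ∈ Finset.range (n-1), t ^ ((j : ℤ) - 2 - i)) +
        fun t : ℝ => t ^ ((j : ℤ) - 1 - n) := by
      funext t
      have h1 : n = n - 1 + 1 := by omega
      have h2 : ((n - 1 : ℕ) : ℤ) = (n : ℤ) - 1 := by omega
      simp only [hFdef, Pi.add_apply]
      conv_lhs => rw [h1, Finset.sum_range_succ]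
      rw [h2, show (j:ℤ) - 2 - ((n:ℤ) - 1) = (j:ℤ) - 1 - n by ring]
    have hm0 : (j : ℤ) - 1 - n ≠ 0 := by omega
    have hm1 : (j : ℤ) - 1 - n ≠ 1 := by omega
    rw [hsplit]
    exact (aux_convexOn_sum (n-1) (fun i => (j : ℤ) - 2 - i)).add_strictConvexOn
      (strictConvexOn_zpow hm0 hm1)
  -- derivative at 1 is negative
  have hderiv : HasDerivAt F (∑ i ∈ Finset.range n, (((j : ℤ) - 2 - i : ℤ) : ℝ)) 1 := by
    refine HasDerivAt.fun_sum fun i _ => ?_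
    have h := hasDerivAt_zpow ((j : ℤ) - 2 - i) (1:ℝ) (Or.inl one_ne_zero)
    simpa using h
  have hDneg : (∑ i ∈ Finset.range n, (((j : ℤ) - 2 - i : ℤ) : ℝ)) < 0 := by
    have hsum : (∑ i ∈ Finset.range n, ((j : ℤ) - 2 - i)) * 2
        = (n : ℤ) * (2 * j - 3 - n) := by
      have hgauss : (∑ i ∈ Finset.range n, (i : ℤ)) * 2 = (n : ℤ) * ((n:ℤ) - 1) := by
        have h := congrArg (fun x : ℕ => (x : ℤ)) (Finset.sum_range_id_mul_two n)
        push_cast [Nat.cast_sub (show 1 ≤ n by omega)] at h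
        linarith [h]
      rw [Finset.sum_sub_distrib, Finset.sum_const, Finset.card_range, nsmul_eq_mul]
      linear_combination -hgauss
    have hZ : (∑ i ∈ Finset.range n, ((j : ℤ) - 2 - i)) < 0 := by
      have h1 : (2 : ℤ) * j - 3 - n ≤ -1 := by omega
      nlinarith [hsum, (by exact_mod_cast hn3 : (3:ℤ) ≤ (n:ℤ))]
    calc (∑ i ∈ Finset.range n, (((j : ℤ) - 2 - i : ℤ) : ℝ))
        = ((∑ i ∈ Finset.range n, ((j : ℤ) - 2 - i) : ℤ) : ℝ) := by push_cast; ring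
      _ < 0 := by exact_mod_cast hZ
  -- a point t₁ > 1 with F t₁ < n
  obtain ⟨t₁, ht₁gt, ht₁lt⟩ : ∃ t₁ : ℝ, 1 < t₁ ∧ F t₁ < n := by
    have hslope := hasDerivAt_iff_tendsto_slope.mp hderiv
    have hev : ∀ᶠ t in 𝓝[≠] (1:ℝ), slope F 1 t < 0 := hslope.eventually_lt_const hDneg
    have hev' : ∀ᶠ t in 𝓝[>] (1:ℝ), slope F 1 t < 0 :=
      hev.filter_mono (nhdsWithin_mono 1 fun x hx => ne_of_gt hx)
    obtain ⟨t, ht, htmem⟩ := (hev'.and eventually_mem_nhdsWithin).exists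
    refine ⟨t, htmem, ?_⟩
    rw [slope_def_field] at ht
    have hpos : 0 < t - 1 := sub_pos.mpr htmem
    have := (div_neg_iff).mp ht
    rcases this with ⟨_, h⟩ | ⟨h, _⟩
    · linarith
    · rw [hF1] at h; linarith
  -- a point t₂ with F t₂ > n
  set t₂ : ℝ := max t₁ (n:ℝ) + 1 with ht₂def
  have ht₂gt₁ : t₁ < t₂ := lt_of_le_of_lt (le_max_left _ _) (by linarith [lt_add_one (max t₁ (n:ℝ))])
  have ht₂n : (n : ℝ) < t₂ := lt_of_le_of_lt (le_max_right _ _) (by linarith [lt_add_one (max t₁ (n:ℝ))])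
  have ht₂1 : 1 < t₂ := lt_trans ht₁gt ht₂gt₁
  have ht₂F : (n : ℝ) < F t₂ := by
    have h0 : t₂ ^ ((j : ℤ) - 2 - (0:ℕ)) ≤ F t₂ := by
      refine Finset.single_le_sum (f := fun i : ℕ => t₂ ^ ((j : ℤ) - 2 - i)) ?_ ?_
      · intro i _; positivity
      · exact Finset.mem_range.mpr (by omega)
    have h1 : t₂ ≤ t₂ ^ ((j : ℤ) - 2 - (0:ℕ)) := by
      have := zpow_right_mono₀ ht₂1.le (show (1:ℤ) ≤ (j : ℤ) - 2 - (0:ℕ) by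
        push_cast; omega)
      simpa using this
    linarith
  -- IVT to find t₀
  have hcont : ContinuousOn F (Set.Icc t₁ t₂) := by
    refine continuousOn_finset_sum _ fun i _ => ?_
    intro x hx
    have hx0 : x ≠ 0 := by
      have : (1:ℝ) < x := lt_of_lt_of_le ht₁gt hx.1
      linarith
    exact (continuousAt_zpow₀ x _ (Or.inl hx0)).continuousWithinAt
  obtain ⟨t₀, ht₀mem, ht₀eq⟩ := intermediate_value_Icc ht₂gt₁.le hcont
    ⟨ht₁lt.le, ht₂F.le⟩
  have ht₀1 : 1 < t₀ := lt_of_lt_of_le ht₁gt ht₀mem.1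
  have ht₀pos : (0:ℝ) < t₀ := by linarith
  -- the two strict inequality claims, from strict convexity
  have hlt : ∀ t : ℝ, 1 < t → t < t₀ → F t < (n : ℝ) := by
    intro t ht1 htt₀
    have hd : 0 < t₀ - 1 := by linarith
    set a : ℝ := (t₀ - t) / (t₀ - 1) with hadef
    set b : ℝ := (t - 1) / (t₀ - 1) with hbdef
    have ha : 0 < a := div_pos (by linarith) hd
    have hb : 0 < b := div_pos (by linarith) hd
    have hab : a + b = 1 := by rw [hadef, hbdef]; field_simp; ring
    have hcomb : a • (1:ℝ) + b • t₀ = t := by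
      simp only [smul_eq_mul, mul_one]
      rw [hadef, hbdef]
      field_simp
      ring
    have := hconv.2 (Set.mem_Ioi.mpr one_pos) (Set.mem_Ioi.mpr ht₀pos)
      (ne_of_lt (lt_trans ht1 htt₀)) ha hb hab
    rw [hcomb, hF1, ht₀eq] at this
    simpa [smul_eq_mul, ← add_mul, hab] using this
  have hgt : ∀ t : ℝ, t₀ < t → (n : ℝ) < F t := by
    intro t htt₀
    have hd : 0 < t - 1 := by linarith
    set a : ℝ := (t - t₀) / (t - 1) with hadef
    set b : ℝ := (t₀ - 1) / (t - 1) with hbdef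
    have ha : 0 < a := div_pos (by linarith) hd
    have hb : 0 < b := div_pos (by linarith) hd
    have hab : a + b = 1 := by rw [hadef, hbdef]; field_simp; ring
    have hcomb : a • (1:ℝ) + b • t = t₀ := by
      simp only [smul_eq_mul, mul_one]
      rw [hadef, hbdef]
      field_simp
      ring
    have hkey := hconv.2 (Set.mem_Ioi.mpr one_pos) (Set.mem_Ioi.mpr (by linarith : (0:ℝ) < t))
      (by intro h; rw [← h] at htt₀; linarith : (1:ℝ) ≠ t) ha hb hab
    rw [hcomb, hF1, ht₀eq] at hkey
    simp only [smul_eq_mul] at hkey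
    -- n < a * n + b * F t, and a = 1 - b
    by_contra hcon
    push_neg at hcon
    have : a * n + b * F t ≤ (a + b) * n := by nlinarith
    rw [hab, one_mul] at this
    linarith
  refine ⟨t₀, ⟨ht₀1, ht₀eq, hlt, hgt⟩, ?_⟩
  rintro y ⟨hy1, hyeq, -, -⟩
  by_contra hne
  rcases lt_or_gt_of_ne hne with h | h
  · exact absurd hyeq (ne_of_lt (hlt y hy1 h))
  · exact absurd hyeq (ne_of_gt (hgt y h))
end

section
/- Fix real λ > 0. For each integer n ≥ ⌈1/λ⌉ let μ_n ∈ (0,1/n] be the unique solution of (1+λ)^{n+1}/λ = (1+μ_n)^{n+1}/μ_n, and set h_n = λ^{n/(n+1)} μ_n^{1/(n+1)}. Then h_n > λ/(1+λ) and lim_{n→∞} h_n = λ/(1+λ). -/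
theorem stmt_13 (l : ℝ) (hl : 0 < l) (μ : ℕ → ℝ)
    (hμ : ∀ n, ⌈1 / l⌉₊ ≤ n → μ n ∈ Set.Ioc (0 : ℝ) (1 / (n : ℝ)) ∧
      (1 + l) ^ (n + 1) / l = (1 + μ n) ^ (n + 1) / μ n) :
    (∀ n, ⌈1 / l⌉₊ ≤ n →
      l / (1 + l) < l ^ ((n : ℝ) / ((n : ℝ) + 1)) * (μ n) ^ (1 / ((n : ℝ) + 1))) ∧
    Filter.Tendsto (fun n : ℕ => l ^ ((n : ℝ) / ((n : ℝ) + 1)) * (μ n) ^ (1 / ((n : ℝ) + 1)))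
      Filter.atTop (nhds (l / (1 + l))) := by
  have hl1 : (0:ℝ) < 1 + l := by linarith
  have key : ∀ n, ⌈1 / l⌉₊ ≤ n →
      l ^ ((n : ℝ) / ((n : ℝ) + 1)) * (μ n) ^ (1 / ((n : ℝ) + 1))
        = l * (1 + μ n) / (1 + l) := by
    intro n hn
    obtain ⟨⟨hμ0, _⟩, heq⟩ := hμ n hn
    have hμ1 : (0:ℝ) < 1 + μ n := by linarith
    set r : ℝ := (1 + μ n) / (1 + l) with hr_def
    have hr : (0:ℝ) < r := by positivity
    have hn1 : ((n:ℝ) + 1) ≠ 0 := by positivity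
    have hμeq : μ n = l * r ^ (n + 1) := by
      rw [div_eq_div_iff hl.ne' hμ0.ne'] at heq
      rw [hr_def, div_pow, mul_div_assoc', eq_div_iff (by positivity)]
      linarith [heq]
    have h1 : (μ n) ^ (1 / ((n : ℝ) + 1)) = l ^ (1 / ((n : ℝ) + 1)) * r := by
      rw [hμeq, Real.mul_rpow hl.le (pow_nonneg hr.le _),
        ← Real.rpow_natCast r (n + 1), ← Real.rpow_mul hr.le]
      push_cast
      rw [mul_one_div, div_self hn1, Real.rpow_one]
    rw [h1, ← mul_assoc, ← Real.rpow_add hl, ← add_div, div_self hn1,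
      Real.rpow_one, hr_def, mul_div_assoc]
  constructor
  · intro n hn
    obtain ⟨⟨hμ0, _⟩, _⟩ := hμ n hn
    rw [key n hn]
    rw [div_lt_div_iff₀ hl1 hl1]
    nlinarith [mul_pos (mul_pos hl hl1) hμ0]
  · have hμ0 : Filter.Tendsto μ Filter.atTop (nhds 0) := by
      apply squeeze_zero' (g := fun n : ℕ => 1 / (n : ℝ))
      · filter_upwards [Filter.eventually_atTop.2 ⟨⌈1 / l⌉₊, fun n hn => hn⟩] with n hn
        exact (hμ n hn).1.1.le
      · filter_upwards [Filter.eventually_atTop.2 ⟨⌈1 / l⌉₊, fun n hn => hn⟩] with n hn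
        exact (hμ n hn).1.2
      · exact tendsto_one_div_atTop_nhds_zero_nat
    have h2 : Filter.Tendsto (fun n : ℕ => l * (1 + μ n) / (1 + l))
        Filter.atTop (nhds (l / (1 + l))) := by
      have h3 : Filter.Tendsto (fun n : ℕ => l * (1 + μ n) / (1 + l)) Filter.atTop
          (nhds (l * (1 + 0) / (1 + l))) :=
        ((Filter.Tendsto.add tendsto_const_nhds hμ0).const_mul l).div_const (1 + l)
      simpa using h3
    apply h2.congr'
    filter_upwards [Filter.eventually_atTop.2 ⟨⌈1 / l⌉₊, fun n hn => hn⟩] with n hn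
    exact (key n hn).symm
end

section
/- Fix real λ > 0 and an integer j ≥ 2. For each integer n ≥ max(j−1, ⌈1/λ⌉) let μ_n ∈ (0,1/n] solve (1+λ)^{n+1}/λ = (1+μ_n)^{n+1}/μ_n, and define λ_{n,j}(λ) = λ·(λ^{−1/(n+1)} μ_n^{1/(n+1)})^{j−1} = λ^{(n+2−j)/(n+1)} μ_n^{(j−1)/(n+1)}. Then λ_{n,j}(λ) ≥ λ/(1+λ)^{j−1} and lim_{n→∞} λ_{n,j}(λ) = λ/(1+λ)^{j−1}. -/
open Filter Real

theorem stmt_14 (l : ℝ) (hl : 0 < l) (j : ℕ) (hj : 2 ≤ j) (μ : ℕ → ℝ)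
    (hμ : ∀ n, max (j - 1) ⌈1 / l⌉₊ ≤ n → μ n ∈ Set.Ioc (0 : ℝ) (1 / (n : ℝ)) ∧
      (1 + l) ^ (n + 1) / l = (1 + μ n) ^ (n + 1) / μ n) :
    (∀ n, max (j - 1) ⌈1 / l⌉₊ ≤ n →
      l / (1 + l) ^ (j - 1) ≤
        l ^ (((n : ℝ) + 2 - j) / ((n : ℝ) + 1)) * (μ n) ^ (((j : ℝ) - 1) / ((n : ℝ) + 1))) ∧
    Filter.Tendsto
      (fun n : ℕ => l ^ (((n : ℝ) + 2 - j) / ((n : ℝ) + 1)) * (μ n) ^ (((j : ℝ) - 1) / ((n : ℝ) + 1)))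
      Filter.atTop (nhds (l / (1 + l) ^ (j - 1))) := by
  have hl1 : (0:ℝ) < 1 + l := by linarith
  have key : ∀ n, max (j - 1) ⌈1 / l⌉₊ ≤ n →
      l ^ (((n : ℝ) + 2 - j) / ((n : ℝ) + 1)) * (μ n) ^ (((j : ℝ) - 1) / ((n : ℝ) + 1))
        = l * ((1 + μ n) / (1 + l)) ^ (j - 1) := by
    intro n hn
    obtain ⟨⟨hμ0, _⟩, heq⟩ := hμ n hn
    have hμ1 : (0:ℝ) < 1 + μ n := by linarith
    have hne : ((n:ℝ) + 1) ≠ 0 := by positivity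
    rw [div_eq_div_iff hl.ne' hμ0.ne'] at heq
    have hmain : μ n = l * ((1 + μ n) / (1 + l)) ^ (n + 1) := by
      rw [div_pow, ← mul_div_assoc, eq_div_iff (by positivity)]
      linear_combination heq
    set c : ℝ := ((j : ℝ) - 1) / ((n : ℝ) + 1) with hc
    have hjc : ((j - 1 : ℕ) : ℝ) = (j : ℝ) - 1 := by
      rw [Nat.cast_sub (by omega)]; norm_num
    have h1 : (μ n) ^ c = l ^ c * ((1 + μ n) / (1 + l)) ^ (j - 1) := by
      calc (μ n) ^ c = (l * ((1 + μ n) / (1 + l)) ^ (n + 1)) ^ c := by rw [← hmain]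
        _ = l ^ c * (((1 + μ n) / (1 + l)) ^ (n + 1) : ℝ) ^ c :=
            Real.mul_rpow hl.le (by positivity)
        _ = l ^ c * ((1 + μ n) / (1 + l)) ^ (((n:ℝ) + 1) * c) := by
            rw [← Real.rpow_natCast ((1 + μ n) / (1 + l)) (n + 1),
              ← Real.rpow_mul (by positivity)]
            push_cast; ring_nf
        _ = l ^ c * ((1 + μ n) / (1 + l)) ^ ((j:ℝ) - 1) := by
            rw [hc, mul_div_cancel₀ _ hne]
        _ = l ^ c * ((1 + μ n) / (1 + l)) ^ (j - 1) := by
            rw [← Real.rpow_natCast ((1 + μ n) / (1 + l)) (j - 1), hjc]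
    have ha : l ^ (((n:ℝ) + 2 - j) / ((n:ℝ) + 1)) * l ^ c = l := by
      rw [hc, ← Real.rpow_add hl, ← add_div,
        show ((n:ℝ) + 2 - j + ((j:ℝ) - 1)) = (n:ℝ) + 1 by ring, div_self hne, Real.rpow_one]
    rw [h1, ← mul_assoc, ha]
  constructor
  · intro n hn
    obtain ⟨⟨hμ0, _⟩, _⟩ := hμ n hn
    rw [key n hn, div_pow]
    have h1 : (1:ℝ) ≤ (1 + μ n) ^ (j - 1) := one_le_pow₀ (by linarith)
    calc l / (1 + l) ^ (j - 1) = l * 1 / (1 + l) ^ (j - 1) := by ring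
      _ ≤ l * (1 + μ n) ^ (j - 1) / (1 + l) ^ (j - 1) := by
          gcongr
      _ = l * ((1 + μ n) ^ (j - 1) / (1 + l) ^ (j - 1)) := by ring
  · have hμtend : Tendsto (fun n => μ n) atTop (nhds 0) := by
      apply squeeze_zero' (g := fun n : ℕ => 1 / (n : ℝ))
      · exact eventually_atTop.2 ⟨_, fun n hn => (hμ n hn).1.1.le⟩
      · exact eventually_atTop.2 ⟨_, fun n hn => (hμ n hn).1.2⟩
      · exact tendsto_one_div_atTop_nhds_zero_nat
    have h2 : Tendsto (fun n => l * ((1 + μ n) / (1 + l)) ^ (j - 1)) atTop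
        (nhds (l * ((1 + (0:ℝ)) / (1 + l)) ^ (j - 1))) := by
      exact Tendsto.const_mul _ (((tendsto_const_nhds.add hμtend).div_const _).pow _)
    have h3 : l * ((1 + (0:ℝ)) / (1 + l)) ^ (j - 1) = l / (1 + l) ^ (j - 1) := by
      rw [div_pow]; norm_num [div_eq_mul_inv]
    rw [h3] at h2
    refine h2.congr' ?_
    filter_upwards [eventually_ge_atTop (max (j - 1) ⌈1 / l⌉₊)] with n hn
    exact (key n hn).symm
end

section
/- Fix real λ > 0 and an integer j ≥ 3. For each sufficiently large integer n, define λ_{n,j}(λ) = λ^{(n+2−j)/(n+1)} μ_n^{(j−1)/(n+1)} with μ_n ∈ (0,1/n] the unique solution of (1+λ)^{n+1}/λ = (1+μ_n)^{n+1}/μ_n. Then λ_{n,j}(λ) ≤ λ^{2−j}; in particular λ_{n,j}(λ) → 0 as λ → ∞ (uniformly in n). -/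
open Real

-- key lemma: μ * l^n ≤ 1
lemma mu_key (n : ℕ) (l μ : ℝ) (hl : 0 < l) (hn : 2 ≤ n)
    (hμ : 0 < μ) (hμn : μ ≤ 1 / (n : ℝ))
    (heq : μ * (1 + l) ^ (n + 1) = l * (1 + μ) ^ (n + 1)) :
    μ * l ^ n ≤ 1 := by
  have hn0 : (0:ℝ) < (n:ℝ) := by positivity
  have hn2 : (2:ℝ) ≤ (n:ℝ) := by exact_mod_cast hn
  have hnμ : (n:ℝ) * μ ≤ 1 := by
    have := mul_le_mul_of_nonneg_left hμn hn0.le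
    rwa [mul_one_div, div_self hn0.ne'] at this
  have hμhalf : μ ≤ 1/2 := by
    calc μ ≤ 1/(n:ℝ) := hμn
      _ ≤ 1/2 := by apply one_div_le_one_div_of_le <;> linarith
  -- step 1 : l * μ ≤ 1
  have hlμ : l * μ ≤ 1 := by
    rcases le_or_gt l (n:ℝ) with h | h
    · calc l * μ ≤ (n:ℝ) * μ := by nlinarith
        _ ≤ 1 := hnμ
    · by_contra hc
      push_neg at hc
      have h2l : (2:ℝ) ≤ l := by linarith
      have hB : (1+μ)^(n+1) ≤ 2.72 * 1.5 := by
        have h1 : (1+μ) ≤ Real.exp μ := by linarith [Real.add_one_le_exp μ]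
        have h2 : (1+μ)^n ≤ Real.exp 1 := by
          calc (1+μ)^n ≤ (Real.exp μ)^n := by
                apply pow_le_pow_left₀ (by linarith) h1
            _ = Real.exp ((n:ℝ)*μ) := by rw [← Real.exp_nat_mul]
            _ ≤ Real.exp 1 := Real.exp_le_exp.mpr hnμ
        have h3 : Real.exp 1 ≤ 2.72 := by
          linarith [Real.exp_one_lt_d9.le]
        calc (1+μ)^(n+1) = (1+μ)^n * (1+μ) := by ring
          _ ≤ 2.72 * 1.5 := by nlinarith [pow_nonneg (by linarith : (0:ℝ) ≤ 1+μ) n]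
      have hA : (1+l)^3 ≤ (1+l)^(n+1) := by
        apply pow_le_pow_right₀ (by linarith) (by omega)
      -- equation consequences
      have e1 : μ * (1+l)^3 ≤ l * (2.72 * 1.5) := by
        calc μ * (1+l)^3 ≤ μ * (1+l)^(n+1) := by nlinarith
          _ = l * (1+μ)^(n+1) := heq
          _ ≤ l * (2.72*1.5) := by nlinarith
      -- multiply by l: l*μ*(1+l)^3 ≤ 4.08 l², and l*μ > 1 so (1+l)^3 < 4.08 l²
      have e2 : (1+l)^3 < 4.08 * l^2 := by nlinarith [pow_pos (by linarith : (0:ℝ) < 1+l) 3]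
      nlinarith [e2]
  -- step 2
  have key : l * (1+μ) ≤ 1 + l := by nlinarith
  have hpow : (l*(1+μ))^(n+1) ≤ (1+l)^(n+1) := by
    apply pow_le_pow_left₀ (by positivity) key
  have hBpos : (0:ℝ) < (1+μ)^(n+1) := by positivity
  have h4 : μ * l^(n+1) * (1+μ)^(n+1) ≤ l * (1+μ)^(n+1) := by
    calc μ * l^(n+1) * (1+μ)^(n+1) = μ * (l*(1+μ))^(n+1) := by rw [mul_pow]; ring
      _ ≤ μ * (1+l)^(n+1) := by nlinarith
      _ = l * (1+μ)^(n+1) := heq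
  have h5 : μ * l^(n+1) ≤ l := le_of_mul_le_mul_right h4 hBpos
  have : μ * l^n * l ≤ 1 * l := by
    calc μ * l^n * l = μ * l^(n+1) := by ring
      _ ≤ l := h5
      _ = 1 * l := (one_mul l).symm
  exact le_of_mul_le_mul_right this hl

theorem stmt_15 (j : ℕ) (hj : 3 ≤ j) :
    (∀ l : ℝ, 0 < l → ∀ n : ℕ, max (j - 1) ⌈1 / l⌉₊ ≤ n →
      ∀ μ : ℝ, μ ∈ Set.Ioc (0 : ℝ) (1 / (n : ℝ)) →
        (1 + l) ^ (n + 1) / l = (1 + μ) ^ (n + 1) / μ →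
        l ^ (((n : ℝ) + 2 - j) / ((n : ℝ) + 1)) * μ ^ (((j : ℝ) - 1) / ((n : ℝ) + 1))
          ≤ l ^ ((2 : ℝ) - j)) ∧
    (∀ ε : ℝ, 0 < ε → ∃ Λ : ℝ, ∀ l : ℝ, Λ ≤ l → ∀ n : ℕ, max (j - 1) ⌈1 / l⌉₊ ≤ n →
      ∀ μ : ℝ, μ ∈ Set.Ioc (0 : ℝ) (1 / (n : ℝ)) →
        (1 + l) ^ (n + 1) / l = (1 + μ) ^ (n + 1) / μ →
        l ^ (((n : ℝ) + 2 - j) / ((n : ℝ) + 1)) * μ ^ (((j : ℝ) - 1) / ((n : ℝ) + 1)) < ε) := by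
  have main : ∀ l : ℝ, 0 < l → ∀ n : ℕ, max (j - 1) ⌈1 / l⌉₊ ≤ n →
      ∀ μ : ℝ, μ ∈ Set.Ioc (0 : ℝ) (1 / (n : ℝ)) →
        (1 + l) ^ (n + 1) / l = (1 + μ) ^ (n + 1) / μ →
        l ^ (((n : ℝ) + 2 - j) / ((n : ℝ) + 1)) * μ ^ (((j : ℝ) - 1) / ((n : ℝ) + 1))
          ≤ l ^ ((2 : ℝ) - j) := by
    intro l hl n hmax μ hμmem heq
    obtain ⟨hμ, hμn⟩ := hμmem
    have hn2 : 2 ≤ n := by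
      have : j - 1 ≤ n := le_trans (le_max_left _ _) hmax
      omega
    have heq' : μ * (1 + l) ^ (n + 1) = l * (1 + μ) ^ (n + 1) := by
      field_simp at heq
      linarith [heq]
    have hkey := mu_key n l μ hl hn2 hμ hμn heq'
    have hn0 : (0:ℝ) < (n:ℝ) + 1 := by positivity
    have hj3 : (3:ℝ) ≤ (j:ℝ) := by exact_mod_cast hj
    -- reduce to pow (n+1) comparison
    set e1 : ℝ := ((n : ℝ) + 2 - j) / ((n : ℝ) + 1)
    set e2 : ℝ := ((j : ℝ) - 1) / ((n : ℝ) + 1)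
    have hLnn : 0 ≤ l ^ e1 * μ ^ e2 := by positivity
    have hRnn : 0 ≤ l ^ ((2:ℝ) - j) := (rpow_pos_of_pos hl _).le
    apply le_of_pow_le_pow_left₀ (Nat.succ_ne_zero n) hRnn
    have hLpow : (l ^ e1 * μ ^ e2) ^ (n+1)
        = l ^ ((n:ℝ) + 2 - j) * μ ^ ((j:ℝ) - 1) := by
      rw [mul_pow, ← rpow_natCast (l ^ e1) (n+1), ← rpow_natCast (μ ^ e2) (n+1),
        ← rpow_mul hl.le, ← rpow_mul hμ.le]
      push_cast
      rw [div_mul_cancel₀ _ hn0.ne', div_mul_cancel₀ _ hn0.ne']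
    have hRpow : (l ^ ((2:ℝ) - j)) ^ (n+1) = l ^ (((2:ℝ) - j) * ((n:ℝ)+1)) := by
      rw [← rpow_natCast (l ^ ((2:ℝ) - j)) (n+1), ← rpow_mul hl.le]
      push_cast
      ring_nf
    rw [hLpow, hRpow]
    -- μ ≤ l ^ (-(n:ℝ))
    have hμle : μ ≤ l ^ (-(n:ℝ)) := by
      rw [rpow_neg hl.le, rpow_natCast, inv_eq_one_div,
        le_div_iff₀ (pow_pos hl n)]
      exact hkey
    have h2 : μ ^ ((j:ℝ) - 1) ≤ (l ^ (-(n:ℝ))) ^ ((j:ℝ) - 1) :=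
      rpow_le_rpow hμ.le hμle (by linarith)
    calc l ^ ((n:ℝ) + 2 - j) * μ ^ ((j:ℝ) - 1)
        ≤ l ^ ((n:ℝ) + 2 - j) * (l ^ (-(n:ℝ))) ^ ((j:ℝ) - 1) := by
          apply mul_le_mul_of_nonneg_left h2 (rpow_nonneg hl.le _)
      _ = l ^ ((n:ℝ) + 2 - j) * l ^ (-(n:ℝ) * ((j:ℝ) - 1)) := by
          rw [← rpow_mul hl.le]
      _ = l ^ ((n:ℝ) + 2 - j + -(n:ℝ) * ((j:ℝ) - 1)) := (rpow_add hl _ _).symm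
      _ = l ^ (((2:ℝ) - j) * ((n:ℝ)+1)) := by congr 1; ring
  constructor
  · exact main
  · intro ε hε
    refine ⟨max 1 (2/ε), fun l hl n hmax μ hμmem heq => ?_⟩
    have hl1 : (1:ℝ) ≤ l := le_trans (le_max_left _ _) hl
    have hl2 : 2/ε ≤ l := le_trans (le_max_right _ _) hl
    have hlpos : 0 < l := lt_of_lt_of_le one_pos hl1
    have hj3 : (3:ℝ) ≤ (j:ℝ) := by exact_mod_cast hj
    calc l ^ (((n : ℝ) + 2 - j) / ((n : ℝ) + 1)) * μ ^ (((j : ℝ) - 1) / ((n : ℝ) + 1))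
        ≤ l ^ ((2:ℝ) - j) := main l hlpos n hmax μ hμmem heq
      _ ≤ l ^ (-1 : ℝ) := rpow_le_rpow_of_exponent_le hl1 (by linarith)
      _ = l⁻¹ := by rw [rpow_neg_one]
      _ ≤ ε/2 := by
          rw [inv_le_comm₀ hlpos (by positivity)]
          have h : (ε/2)⁻¹ = 2/ε := by field_simp
          rw [h]; exact hl2
      _ < ε := by linarith
end

section
/- Fix real λ > 0 and integers n₁ > n₂ ≥ 1 with n₂ ≥ ⌈1/λ⌉. Let μ_{n_i} ∈ (0, 1/n_i] be the unique solution of (1+λ)^{n_i+1}/λ = (1+μ_{n_i})^{n_i+1}/μ_{n_i}, and set h_{n_i} = λ^{n_i/(n_i+1)} μ_{n_i}^{1/(n_i+1)}, for i = 1, 2. Then h_{n₁} < h_{n₂} provided λ > 1/n₂. -/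
/-- The fixed point identity: h = l^(n/(n+1)) * μ^(1/(n+1)) = l(1+μ)/(1+l). -/
lemma h_eq (l μ : ℝ) (n : ℕ) (hl : 0 < l) (hμ : 0 < μ)
    (heq : (1 + l) ^ (n + 1) / l = (1 + μ) ^ (n + 1) / μ) :
    l ^ ((n : ℝ) / ((n : ℝ) + 1)) * μ ^ (1 / ((n : ℝ) + 1)) = l * (1 + μ) / (1 + l) := by
  have h1l : (0:ℝ) < 1 + l := by linarith
  have h1μ : (0:ℝ) < 1 + μ := by linarith
  have hne : ((n:ℝ) + 1) ≠ 0 := by positivity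
  have key : (l ^ ((n : ℝ) / ((n : ℝ) + 1)) * μ ^ (1 / ((n : ℝ) + 1))) ^ (n+1)
      = (l * (1 + μ) / (1 + l)) ^ (n+1) := by
    have e1 : (l ^ ((n : ℝ) / ((n : ℝ) + 1))) ^ (n+1) = l ^ n := by
      rw [← Real.rpow_natCast (l ^ ((n : ℝ) / ((n : ℝ) + 1))) (n+1),
        ← Real.rpow_mul hl.le]
      push_cast
      rw [div_mul_cancel₀ _ hne, Real.rpow_natCast]
    have e2 : (μ ^ (1 / ((n : ℝ) + 1))) ^ (n+1) = μ := by
      rw [← Real.rpow_natCast (μ ^ (1 / ((n : ℝ) + 1))) (n+1),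
        ← Real.rpow_mul hμ.le]
      push_cast
      rw [one_div_mul_cancel hne, Real.rpow_one]
    have heq' : (1 + l) ^ (n + 1) * μ = (1 + μ) ^ (n + 1) * l := by
      field_simp at heq
      linarith [heq]
    rw [mul_pow, e1, e2, div_pow, mul_pow]
    rw [eq_div_iff (by positivity)]
    calc l ^ n * μ * ((1+l)^(n+1)) = l ^ n * ((1 + l) ^ (n + 1) * μ) := by ring
    _ = l ^ n * ((1 + μ) ^ (n + 1) * l) := by rw [heq']
    _ = l ^ (n+1) * (1+μ)^(n+1) := by ring
  have := (pow_left_inj₀ (a := l ^ ((n : ℝ) / ((n : ℝ) + 1)) * μ ^ (1 / ((n : ℝ) + 1)))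
    (b := l * (1 + μ) / (1 + l)) (by positivity) (by positivity) (Nat.succ_ne_zero n)).mp key
  exact this

/-- f_n(x) = (1+x)^(n+1)/x is strictly decreasing on (0, 1/n]. -/
lemma f_anti (n : ℕ) (hn : 1 ≤ n) {x y : ℝ} (hx : 0 < x) (hxy : x < y)
    (hy : y ≤ 1 / (n : ℝ)) :
    (1 + y) ^ (n + 1) / y < (1 + x) ^ (n + 1) / x := by
  have hy0 : 0 < y := hx.trans hxy
  have h1y : (0:ℝ) < 1 + y := by linarith
  have h1x : (0:ℝ) < 1 + x := by linarith
  have hn0 : (0:ℝ) < (n:ℝ) := by exact_mod_cast hn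
  have hny : (n:ℝ) * y ≤ 1 := by
    rw [le_div_iff₀ hn0] at hy; linarith
  set s : ℝ := (x - y) / (1 + y) with hs
  have hs_neg : s < 0 := div_neg_of_neg_of_pos (by linarith) h1y
  have hs_gt : -1 < s := by
    rw [hs, lt_div_iff₀ h1y]
    linarith
  -- Bernoulli strict: 1 + (n+1) * s < (1+s)^(n+1)
  have hp1 : (1:ℝ) < (n:ℝ) + 1 := by
    have : (1:ℝ) ≤ (n:ℝ) := by exact_mod_cast hn
    linarith
  have hbern : 1 + ((n:ℝ)+1) * s < (1 + s) ^ ((n:ℝ)+1) :=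
    one_add_mul_self_lt_rpow_one_add hs_gt.le (ne_of_lt hs_neg) hp1
  have hpow : (1 + s) ^ ((n:ℝ)+1) = ((1+x)/(1+y)) ^ (n+1) := by
    have : 1 + s = (1+x)/(1+y) := by
      rw [hs]
      field_simp
      ring
    rw [this, ← Real.rpow_natCast ((1+x)/(1+y)) (n+1)]
    norm_num
  -- 1 + (n+1)*s ≥ x / y since (n+1)(y-x)/(1+y) ≤ (y-x)/y given n*y ≤ 1
  have hxyq : x / y ≤ 1 + ((n:ℝ)+1) * s := by
    rw [hs]
    rw [div_le_iff₀ hy0]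
    have key : ((n:ℝ)+1) * (x - y) / (1+y) * y ≥ (x - y) := by
      rw [ge_iff_le, div_mul_eq_mul_div, le_div_iff₀ h1y]
      nlinarith
    calc x = y + (x - y) := by ring
    _ ≤ y + ((n:ℝ)+1) * (x - y) / (1+y) * y := by linarith
    _ = (1 + ((n:ℝ)+1) * ((x-y)/(1+y))) * y := by ring
  have hfin : x / y < ((1+x)/(1+y)) ^ (n+1) := by
    calc x / y ≤ 1 + ((n:ℝ)+1) * s := hxyq
    _ < (1 + s) ^ ((n:ℝ)+1) := hbern
    _ = ((1+x)/(1+y)) ^ (n+1) := hpow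
  rw [div_pow] at hfin
  rw [div_lt_div_iff₀ hy0 hx]
  rw [div_lt_div_iff₀ hy0 (by positivity)] at hfin
  nlinarith [pow_pos h1y (n+1), pow_pos h1x (n+1)]

theorem stmt_16 (l : ℝ) (hl : 0 < l) (n₁ n₂ : ℕ) (h12 : n₂ < n₁) (hn₂ : 1 ≤ n₂)
    (hceil : ⌈1 / l⌉₊ ≤ n₂) (hl2 : 1 / (n₂ : ℝ) < l) (μ₁ μ₂ : ℝ)
    (hμ₁ : μ₁ ∈ Set.Ioc (0 : ℝ) (1 / (n₁ : ℝ)))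
    (heq₁ : (1 + l) ^ (n₁ + 1) / l = (1 + μ₁) ^ (n₁ + 1) / μ₁)
    (hμ₂ : μ₂ ∈ Set.Ioc (0 : ℝ) (1 / (n₂ : ℝ)))
    (heq₂ : (1 + l) ^ (n₂ + 1) / l = (1 + μ₂) ^ (n₂ + 1) / μ₂) :
    l ^ ((n₁ : ℝ) / ((n₁ : ℝ) + 1)) * μ₁ ^ (1 / ((n₁ : ℝ) + 1)) <
    l ^ ((n₂ : ℝ) / ((n₂ : ℝ) + 1)) * μ₂ ^ (1 / ((n₂ : ℝ) + 1)) := by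
  obtain ⟨hμ₁0, hμ₁1⟩ := hμ₁
  obtain ⟨hμ₂0, hμ₂1⟩ := hμ₂
  have hn₂0 : (0:ℝ) < (n₂:ℝ) := by exact_mod_cast hn₂
  have hn₁0 : (0:ℝ) < (n₁:ℝ) := by exact_mod_cast (by omega : 0 < n₁)
  have h1l : (0:ℝ) < 1 + l := by linarith
  have hμ₁le : μ₁ ≤ 1 / (n₂ : ℝ) := by
    apply le_trans hμ₁1
    apply one_div_le_one_div_of_le hn₂0
    exact_mod_cast h12.le
  have hμ₁lt_l : μ₁ < l := lt_of_le_of_lt hμ₁le hl2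
  -- key: f_{n₂}(μ₁) > f_{n₂}(μ₂)
  have hkey : (1 + μ₂) ^ (n₂ + 1) / μ₂ < (1 + μ₁) ^ (n₂ + 1) / μ₁ := by
    rw [← heq₂]
    -- (1+μ₁)^(n₂+1)/μ₁ = (1+l)^(n₁+1)/(l * (1+μ₁)^(n₁-n₂))
    have hk : n₁ = (n₂ + (n₁ - n₂)) := by omega
    set k := n₁ - n₂ with hkdef
    have hk1 : 1 ≤ k := by omega
    have h1μ₁ : (0:ℝ) < 1 + μ₁ := by linarith
    have e : (1 + μ₁) ^ (n₁ + 1) = (1 + μ₁) ^ (n₂ + 1) * (1 + μ₁) ^ k := by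
      rw [← pow_add]; congr 1; omega
    have e2 : (1 + l) ^ (n₁ + 1) = (1 + l) ^ (n₂ + 1) * (1 + l) ^ k := by
      rw [← pow_add]; congr 1; omega
    have hlt : (1 + μ₁) ^ k < (1 + l) ^ k :=
      pow_lt_pow_left₀ (by linarith) (by linarith) (by omega)
    -- from heq₁: (1+l)^(n₂+1) * (1+l)^k * μ₁ = (1+μ₁)^(n₂+1) * (1+μ₁)^k * l
    have heq₁' : (1 + l) ^ (n₂+1) * (1 + l) ^ k * μ₁ = (1 + μ₁) ^ (n₂+1) * (1 + μ₁) ^ k * l := by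
      have := heq₁
      field_simp at this
      rw [e, e2] at this
      linarith
    rw [div_lt_div_iff₀ hl hμ₁0]
    have hPpos : (0:ℝ) < (1 + l) ^ k := pow_pos h1l k
    have hYpos : (0:ℝ) < (1 + μ₁) ^ (n₂+1) * l := mul_pos (pow_pos h1μ₁ _) hl
    rw [← mul_lt_mul_iff_of_pos_right hPpos]
    calc (1 + l) ^ (n₂ + 1) * μ₁ * (1 + l) ^ k
        = (1 + μ₁) ^ (n₂+1) * l * (1 + μ₁) ^ k := by linarith [heq₁']
      _ < (1 + μ₁) ^ (n₂+1) * l * (1 + l) ^ k := by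
          exact mul_lt_mul_of_pos_left hlt hYpos
  -- hence μ₁ < μ₂
  have hμlt : μ₁ < μ₂ := by
    by_contra hcon
    push_neg at hcon
    rcases eq_or_lt_of_le hcon with heqm | hltm
    · rw [heqm] at hkey; exact lt_irrefl _ hkey
    · exact absurd (f_anti n₂ hn₂ hμ₂0 hltm hμ₁le) (by linarith)
  rw [h_eq l μ₁ n₁ hl hμ₁0 heq₁, h_eq l μ₂ n₂ hl hμ₂0 heq₂]
  rw [div_lt_div_iff₀ h1l h1l]
  nlinarith [mul_pos hl h1l]
end

section
/- Fix real λ > 0 and integers n+1 > n ≥ ⌈1/λ⌉ with λ > 1/n. Let μ_n ∈ (0,1/n] and μ_{n+1} ∈ (0,1/(n+1)] be the unique solutions of (1+λ)^{n+1}/λ = (1+μ_n)^{n+1}/μ_n and (1+λ)^{n+2}/λ = (1+μ_{n+1})^{n+2}/μ_{n+1} respectively. Then μ_{n+1} < μ_n. -/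
theorem stmt_17 (l : ℝ) (hl : 0 < l) (n : ℕ) (hn : ⌈1 / l⌉₊ ≤ n) (hln : 1 / (n : ℝ) < l)
    (μn μn1 : ℝ)
    (hμn : μn ∈ Set.Ioc (0 : ℝ) (1 / (n : ℝ)))
    (heqn : (1 + l) ^ (n + 1) / l = (1 + μn) ^ (n + 1) / μn)
    (hμn1 : μn1 ∈ Set.Ioc (0 : ℝ) (1 / ((n : ℝ) + 1)))
    (heqn1 : (1 + l) ^ (n + 2) / l = (1 + μn1) ^ (n + 2) / μn1) :
    μn1 < μn := by
  obtain ⟨hμn0, hμnle⟩ := hμn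
  obtain ⟨hμn10, hμn1le⟩ := hμn1
  have hμnl : μn < l := lt_of_le_of_lt hμnle hln
  by_contra hcon
  push_neg at hcon
  have hμnle' : μn ≤ 1 / ((n : ℝ) + 1) := le_trans hcon hμn1le
  set f : ℝ → ℝ := fun x => (1 + x) ^ (n + 2) / x with hf
  have hanti : StrictAntiOn f (Set.Ioc 0 (1 / ((n : ℝ) + 1))) := by
    apply strictAntiOn_of_deriv_neg (convex_Ioc _ _)
    · apply ContinuousOn.div
      · fun_prop
      · fun_prop
      · intro x hx; exact ne_of_gt hx.1
    · intro x hx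
      rw [interior_Ioc] at hx
      obtain ⟨hx0, hx1⟩ := hx
      have hxne : x ≠ 0 := ne_of_gt hx0
      have h1x : (0 : ℝ) < 1 + x := by linarith
      have hd : HasDerivAt f
          (((↑(n + 2) * (1 + x) ^ (n + 1) * 1) * x - (1 + x) ^ (n + 2) * 1) / x ^ 2) x := by
        exact HasDerivAt.div (((hasDerivAt_id x).const_add 1).pow (n + 2)) (hasDerivAt_id x) hxne
      rw [hd.deriv]
      apply div_neg_of_neg_of_pos
      · have heq : (↑(n + 2) * (1 + x) ^ (n + 1) * 1) * x - (1 + x) ^ (n + 2) * 1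
            = (1 + x) ^ (n + 1) * (((n : ℝ) + 1) * x - 1) := by
          push_cast
          ring
        rw [heq]
        apply mul_neg_of_pos_of_neg (pow_pos h1x _)
        have hn1 : (0 : ℝ) < (n : ℝ) + 1 := by positivity
        have hx1' : x * ((n : ℝ) + 1) < 1 := (lt_div_iff₀ hn1).mp hx1
        nlinarith [hx1']
      · positivity
  have hpos : (0 : ℝ) < (1 + μn) ^ (n + 1) / μn := by positivity
  have h1 : f μn1 = (1 + l) * ((1 + μn) ^ (n + 1) / μn) := by
    rw [hf]
    simp only
    rw [← heqn1, ← heqn, pow_succ]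
    ring
  have h2 : f μn = (1 + μn) * ((1 + μn) ^ (n + 1) / μn) := by
    rw [hf]
    simp only
    rw [pow_succ]
    ring
  have hkey : f μn < f μn1 := by
    rw [h1, h2]
    apply mul_lt_mul_of_pos_right (by linarith) hpos
  have := (hanti.le_iff_ge ⟨hμn10, hμn1le⟩ ⟨hμn0, hμnle'⟩).mpr hcon
  linarith
end

section
/- Let n ≥ 10 be an integer and set w = 2(n−1)²/(n−2). Define H(y) = w − y + 1 − (w/y)^n for y > 0. Then H(2n−2) > 0. -/
theorem stmt_18 (n : ℕ) (hn : 10 ≤ n) :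
    0 < (2 * ((n : ℝ) - 1) ^ 2 / ((n : ℝ) - 2)) - (2 * (n : ℝ) - 2) + 1 -
      ((2 * ((n : ℝ) - 1) ^ 2 / ((n : ℝ) - 2)) / (2 * (n : ℝ) - 2)) ^ n := by
  rcases lt_or_ge n 34 with h | h
  · interval_cases n <;> norm_num
  · set x := (n : ℝ) with hxdef
    have hx : (34:ℝ) ≤ x := by rw [hxdef]; exact_mod_cast h
    have hb : (0:ℝ) < x - 2 := by linarith
    have hb1 : (0:ℝ) < 2*x - 2 := by linarith
    have h1 : (2*(x-1)^2/(x-2)) - (2*x-2) + 1 = 2*(x-1)/(x-2) + 1 := by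
      field_simp; ring
    have h2 : (2*(x-1)^2/(x-2))/(2*x-2) = (x-1)/(x-2) := by
      rw [div_div]
      rw [div_eq_div_iff (by positivity) hb.ne']
      ring
    rw [h1, h2]
    have h4 : (2:ℝ) ≤ 2*(x-1)/(x-2) := by
      rw [le_div_iff₀ hb]; linarith
    have e1 : (x-1)/(x-2) ≤ Real.exp (1/(x-2)) := by
      have h := Real.add_one_le_exp (1/(x-2))
      have heq : (x-1)/(x-2) = 1/(x-2) + 1 := by field_simp; ring
      linarith [heq ▸ h]
    have e2 : ((x-1)/(x-2))^n ≤ Real.exp (x/(x-2)) := by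
      calc ((x-1)/(x-2))^n ≤ (Real.exp (1/(x-2)))^n := by
            apply pow_le_pow_left₀ (div_nonneg (by linarith) (by linarith)) e1
        _ = Real.exp (n * (1/(x-2))) := by rw [← Real.exp_nat_mul]
        _ = Real.exp (x/(x-2)) := by rw [← hxdef]; ring_nf
    have e3 : x/(x-2) ≤ 1 + 1/16 := by
      rw [div_le_iff₀ hb]; linarith
    have e4 : Real.exp (1/16) ≤ 16/15 := by
      have h := Real.add_one_le_exp (-(1/16 : ℝ))
      have hp : (0:ℝ) < Real.exp (1/16) := Real.exp_pos _
      have hm : Real.exp (1/16) * Real.exp (-(1/16)) = 1 := by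
        rw [← Real.exp_add]; norm_num
      nlinarith
    have e5 : Real.exp (x/(x-2)) < 3 := by
      calc Real.exp (x/(x-2)) ≤ Real.exp (1 + 1/16) := Real.exp_le_exp.2 e3
        _ = Real.exp 1 * Real.exp (1/16) := by rw [← Real.exp_add]
        _ ≤ 2.7182818286 * (16/15) := by
            apply mul_le_mul (le_of_lt Real.exp_one_lt_d9) e4 (by positivity) (by norm_num)
        _ < 3 := by norm_num
    nlinarith [e2, e5, h4]
end
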